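/- arXiv:1806.09098 — 2 statements merged into one kernel-verified Lean document; each statement's English description precedes it below -/
import Mathlib

section
/- Let {K_α, Λ_α}_{α∈Λ} be an f.r.f.t. nested structure of K. Then for every α ∈ Λ and all distinct β, β' ∈ Λ_α, one has K_β ∩ K_{β'} = V_β ∩ V_{β'}. -/
open Set

noncomputable section

/-- Points of `ℝ^d`. -/
abbrev Pt (d : ℕ) := EuclideanSpace ℝ (Fin d)

/-- `f` is a similitude: it scales all distances by some ratio `r > 0`. -/
def IsSimilitude {d : ℕ} (f : Pt d → Pt d) : Prop :=
  ∃ r : ℝ, 0 < r ∧ ∀ x y, dist (f x) (f y) = r * dist x y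

/-- The levels `Λ^{(k)}_ϑ` of a nested structure: `Λ^{(0)}_ϑ = {ϑ}` and
`Λ^{(k+1)}_ϑ = ⋃_{β ∈ Λ^{(k)}_ϑ} Λ_β`. -/
def levels {Λ : Type} (child : Λ → Set Λ) (root : Λ) : ℕ → Set Λ
  | 0 => {root}
  | k + 1 => ⋃ β ∈ levels child root k, child β

/-- The set of parents of `α`. -/
def parentSet {Λ : Type} (child : Λ → Set Λ) (α : Λ) : Set Λ := {γ | α ∈ child γ}

/-- `P^n(α)`: the set of `n`-fold parents of `α` (`P^0(α) = {α}`). -/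
def parentIter {Λ : Type} (child : Λ → Set Λ) : ℕ → Λ → Set Λ
  | 0, α => {α}
  | n + 1, α => ⋃ β ∈ parentIter child n α, parentSet child β

/-- `C_α = ⋃_{β ≠ β' ∈ Λ_α} K_β ∩ K_{β'}`. -/
def Cset {d : ℕ} {Λ : Type} (Kα : Λ → Set (Pt d)) (child : Λ → Set Λ) (α : Λ) :
    Set (Pt d) :=
  ⋃ β ∈ child α, ⋃ β' ∈ child α, ⋃ (_ : β ≠ β'), (Kα β ∩ Kα β')

/-- `α ∼ β`: there is a similitude mapping `K_α` onto `K_β`. -/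
def simRel {d : ℕ} {Λ : Type} (Kα : Λ → Set (Pt d)) (α β : Λ) : Prop :=
  ∃ f : Pt d → Pt d, IsSimilitude f ∧ f '' Kα α = Kα β

/-- The boundary `V_α = ⋃_{β∼α, β≠ϑ} φ_{β,α}(K_β ∩ ⋃_{n≥1} ⋃_{γ∈P^n(β)} C_γ)`. -/
def Vset {d : ℕ} {Λ : Type} (Kα : Λ → Set (Pt d)) (child : Λ → Set Λ)
    (φ : Λ → Λ → Pt d → Pt d) (root α : Λ) : Set (Pt d) :=
  ⋃ β, ⋃ (_ : simRel Kα β α ∧ β ≠ root),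
    φ β α '' (Kα β ∩ ⋃ n, ⋃ (_ : 1 ≤ n), ⋃ γ ∈ parentIter child n β, Cset Kα child γ)

/-- A nested structure `{K_α, Λ_α}_{α ∈ Λ}` of the (connected self-similar) set `K`:
a countable family of distinct compact connected subsets of `K`, none a singleton,
with a root `ϑ` such that `K_ϑ = K`, each `K_α` the union of its (at least two)
children, and every non-root index an offspring of the root. -/
structure NestedStructure (d : ℕ) (K : Set (Pt d)) (Λ : Type) : Type where
  Kα : Λ → Set (Pt d)
  child : Λ → Set Λ
  root : Λ
  countable : Countable Λ
  inj : Function.Injective Kα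
  compact : ∀ α, IsCompact (Kα α)
  connected : ∀ α, IsConnected (Kα α)
  not_singleton : ∀ α, ¬ ∃ x, Kα α = {x}
  subset_K : ∀ α, Kα α ⊆ K
  root_eq : Kα root = K
  child_finite : ∀ α, (child α).Finite
  child_nontrivial : ∀ α, (child α).Nontrivial
  child_union : ∀ α, Kα α = ⋃ β ∈ child α, Kα β
  offspring : ∀ α, α ≠ root → ∃ k, α ∈ levels child root k

/-- A finitely ramified of finite type (f.r.f.t.) nested structure: a nested structure
together with a coherent family of similitudes `φ_{α,β}` for equivalent indices,
satisfying (A1) finitely many `∼`-equivalence classes, (A2) compatible one-to-one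
correspondence between children of equivalent indices, and (A3) all boundaries `V_α`
finite. -/
structure FRFTStructure (d : ℕ) (K : Set (Pt d)) (Λ : Type)
    extends NestedStructure d K Λ where
  φ : Λ → Λ → Pt d → Pt d
  φ_isSim : ∀ α β, simRel Kα α β → IsSimilitude (φ α β)
  φ_maps : ∀ α β, simRel Kα α β → φ α β '' Kα α = Kα β
  φ_refl : ∀ α, φ α α = id
  φ_comp : ∀ α β γ, simRel Kα α γ → simRel Kα γ β → (φ γ β) ∘ (φ α γ) = φ α β
  A1 : (Set.range fun α => {β | simRel Kα α β}).Finite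
  A2 : ∀ α α', simRel Kα α α' → ∀ β ∈ child α,
      ∃! β', β' ∈ child α' ∧ simRel Kα β β' ∧ φ β β' = φ α α'
  A3 : ∀ α, (Vset Kα child φ root α).Finite

/-!
`V_β ⊆ K_β` because every `φ_{γ,β}` maps `K_γ` onto `K_β`. Conversely, a point of
`K_β ∩ K_{β'}` lies in `C_α`, and `α` is a parent of `β`, so the term `γ = β` of `V_β`
(where `φ_{β,β} = id`) contains it, as long as `β ≠ ϑ`. The root is nobody's child: otherwise
its parent would have the same set, hence be the root itself, and a second child `γ` of the root
would satisfy `K_γ = K_γ ∩ K_ϑ ⊆ V_γ`, which is impossible since `V_γ` is finite (A3) while the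
continuum `K_γ` is infinite.
-/

lemma simRel_refl {d : ℕ} {Λ : Type} (Kα : Λ → Set (Pt d)) (α : Λ) : simRel Kα α α :=
  ⟨id, ⟨1, one_pos, by simp⟩, by simp⟩

lemma mem_parentIter_one {Λ : Type} {child : Λ → Set Λ} {α β : Λ} (hβ : β ∈ child α) :
    α ∈ parentIter child 1 β := by
  simpa [parentIter, parentSet] using hβ

lemma inter_subset_Cset {d : ℕ} {Λ : Type} {Kα : Λ → Set (Pt d)} {child : Λ → Set Λ}
    {α β β' : Λ} (hβ : β ∈ child α) (hβ' : β' ∈ child α) (hne : β ≠ β') :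
    Kα β ∩ Kα β' ⊆ Cset Kα child α := fun _ hx => by
  simp only [Cset, mem_iUnion]
  exact ⟨β, hβ, β', hβ', hne, hx⟩

lemma NestedStructure.Kα_infinite {d : ℕ} {K : Set (Pt d)} {Λ : Type}
    (S : NestedStructure d K Λ) (α : Λ) : (S.Kα α).Infinite := by
  refine (S.connected α).isPreconnected.infinite_of_nontrivial ?_
  obtain ⟨x, hx⟩ := (S.connected α).nonempty
  by_contra h
  exact S.not_singleton α ⟨x, (not_nontrivial_iff.mp h).eq_singleton_of_mem hx⟩

namespace FRFTStructure

variable {d : ℕ} {K : Set (Pt d)} {Λ : Type} (S : FRFTStructure d K Λ)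

lemma Vset_subset_Kα (β : Λ) : Vset S.Kα S.child S.φ S.root β ⊆ S.Kα β := by
  simp only [Vset, iUnion_subset_iff, and_imp]
  intro γ hγβ _
  rw [← S.φ_maps γ β hγβ]
  exact image_mono inter_subset_left

lemma Kα_inter_ancestor_Cset_subset_Vset {β : Λ} (hβ : β ≠ S.root) :
    S.Kα β ∩ ⋃ n, ⋃ (_ : 1 ≤ n), ⋃ γ ∈ parentIter S.child n β, Cset S.Kα S.child γ
      ⊆ Vset S.Kα S.child S.φ S.root β := by
  intro x hx
  simp only [Vset, mem_iUnion]
  exact ⟨β, ⟨simRel_refl _ β, hβ⟩, by rwa [S.φ_refl, image_id]⟩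

lemma inter_subset_Vset_of_ne_root {α β β' : Λ} (hβ : β ∈ S.child α) (hβ' : β' ∈ S.child α)
    (hne : β ≠ β') (hroot : β ≠ S.root) :
    S.Kα β ∩ S.Kα β' ⊆ Vset S.Kα S.child S.φ S.root β := by
  intro x hx
  refine S.Kα_inter_ancestor_Cset_subset_Vset hroot ⟨hx.1, ?_⟩
  simp only [mem_iUnion]
  exact ⟨1, le_rfl, α, mem_parentIter_one hβ, inter_subset_Cset hβ hβ' hne hx⟩

lemma root_not_mem_child (α : Λ) : S.root ∉ S.child α := by
  intro hroot
  have hα : α = S.root := S.inj <| Subset.antisymm (S.root_eq.symm ▸ S.subset_K α)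
    (S.child_union α ▸ subset_biUnion_of_mem hroot)
  subst hα
  obtain ⟨γ, hγ, hγne⟩ := (S.child_nontrivial S.root).exists_ne S.root
  have hKγ : S.Kα γ ⊆ Vset S.Kα S.child S.φ S.root γ := fun x hx =>
    S.inter_subset_Vset_of_ne_root hγ hroot hγne hγne
      ⟨hx, S.root_eq.symm ▸ S.subset_K γ hx⟩
  exact S.Kα_infinite γ ((S.A3 γ).subset hKγ)

lemma inter_subset_Vset {α β β' : Λ} (hβ : β ∈ S.child α) (hβ' : β' ∈ S.child α)
    (hne : β ≠ β') : S.Kα β ∩ S.Kα β' ⊆ Vset S.Kα S.child S.φ S.root β :=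
  S.inter_subset_Vset_of_ne_root hβ hβ' hne fun h => S.root_not_mem_child α (h ▸ hβ)

end FRFTStructure

theorem stmt2_general {d : ℕ}
    (K : Set (Pt d))
    {Λ : Type} (S : FRFTStructure d K Λ) (α : Λ) :
    ∀ β ∈ S.child α, ∀ β' ∈ S.child α, β ≠ β' →
      S.Kα β ∩ S.Kα β'
        = Vset S.Kα S.child S.φ S.root β ∩ Vset S.Kα S.child S.φ S.root β' := by
  intro β hβ β' hβ' hne
  refine Subset.antisymm (subset_inter (S.inter_subset_Vset hβ hβ' hne) ?_)
    (inter_subset_inter (S.Vset_subset_Kα β) (S.Vset_subset_Kα β'))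
  rw [inter_comm]
  exact S.inter_subset_Vset hβ' hβ hne.symm

/-- **Proposition 2.3(b).** For an f.r.f.t. nested structure of a connected self-similar
set `K`, for every `α` and all distinct children `β, β' ∈ Λ_α`,
`K_β ∩ K_{β'} = V_β ∩ V_{β'}`. -/
theorem stmt2 {d N : ℕ} (hN : 2 ≤ N) (F : Fin N → Pt d → Pt d) (c : Fin N → ℝ)
    (hc : ∀ i, 0 < c i ∧ c i < 1)
    (hF : ∀ i x y, dist (F i x) (F i y) = c i * dist x y)
    (K : Set (Pt d)) (hKc : IsCompact K) (hKne : K.Nonempty)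
    (hself : K = ⋃ i, F i '' K) (hconn : IsConnected K)
    {Λ : Type} (S : FRFTStructure d K Λ) (α : Λ) :
    ∀ β ∈ S.child α, ∀ β' ∈ S.child α, β ≠ β' →
      S.Kα β ∩ S.Kα β'
        = Vset S.Kα S.child S.φ S.root β ∩ Vset S.Kα S.child S.φ S.root β' :=
  stmt2_general K S α
end
end

section
/- Let K be a self-similar set with IFS {F_i}_{i=1}^N of contractive similitudes and c_* = min_i c_i. Then the following two conditions are equivalent: (1) there exists 0 < δ ≤ c_* such that L_δ(K) < ∞; (2) for every 0 < δ ≤ c_*, L_δ(K) < ∞. -/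
open Set

noncomputable section

/-- `F_w = F_{w_1} ∘ ⋯ ∘ F_{w_m}` for a word `w = w_1⋯w_m`. -/
def Fword {α : Type*} {N : ℕ} (F : Fin N → α → α) : List (Fin N) → α → α
  | [] => id
  | i :: w => F i ∘ Fword F w

/-- `c_w = c_{w_1}⋯c_{w_m}`, the similarity ratio of `F_w`. -/
def cword {N : ℕ} (c : Fin N → ℝ) (w : List (Fin N)) : ℝ := (w.map c).prod

/-- `(F_{w^{(1)}}K, …, F_{w^{(m)}}K)` (encoded by the words `w 0, …, w (m-1)`) is an
overlapping chain: the copies are distinct, none is contained in another, and each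
`F_{w^{(i+1)}}K` has infinite intersection with the union of the preceding copies. -/
def IsOverlapChain {α : Type*} {N : ℕ} (F : Fin N → α → α) (K : Set α)
    (m : ℕ) (w : ℕ → List (Fin N)) : Prop :=
  (∀ i < m, ∀ j < m, i ≠ j → Fword F (w i) '' K ≠ Fword F (w j) '' K) ∧
  (∀ i < m, ∀ j < m, i ≠ j → ¬ Fword F (w i) '' K ⊆ Fword F (w j) '' K) ∧
  (∀ i : ℕ, i + 1 < m →
    ((Fword F (w (i + 1)) '' K) ∩ ⋃ j ∈ Finset.range (i + 1), Fword F (w j) '' K).Infinite)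

/-- A `δ`-overlapping chain: an overlapping chain all of whose members have comparable
similarity ratios: `δ ≤ c_{w^{(i)}}/c_{w^{(j)}} ≤ 1/δ`. -/
def IsDeltaChain {α : Type*} {N : ℕ} (F : Fin N → α → α) (c : Fin N → ℝ) (K : Set α)
    (δ : ℝ) (m : ℕ) (w : ℕ → List (Fin N)) : Prop :=
  IsOverlapChain F K m w ∧
  ∀ i < m, ∀ j < m,
    δ ≤ cword c (w i) / cword c (w j) ∧ cword c (w i) / cword c (w j) ≤ 1 / δ

/-!
If `K` is finite, no two copies meet in an infinite set, so chains have length at most one.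
Otherwise let `T` be the largest ratio in a `δ`-chain. Each copy of the chain lies in an ancestor
copy of ratio in `(c_* T, T]`; the maximal ancestors, listed in order of first appearance, again
form an overlapping chain, and since its ratios lie in one band `(c_* T, T]` and `δ₀ ≤ c_*` it is a
`δ₀`-chain: there are at most `L₀` of them. Inside each maximal ancestor `G`, the chain's copies
form an antichain of copies meeting `G` infinitely with ratio between `δ c_G` and `c_G`. Such an
antichain is split according to a child `G_j` it meets infinitely: copies not larger than `G_j`
are counted recursively inside `G_j`, and the larger ones lie in the band of `G` together with
`G_j`, so that they (with `G_j` added, unless they all contain it) form a `δ₀`-chain.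
-/

open Metric Bornology Function

section Words

variable {α : Type*} {N : ℕ} {F : Fin N → α → α} {K : Set α} {c : Fin N → ℝ}

lemma Fword_append (u v : List (Fin N)) : Fword F (u ++ v) = Fword F u ∘ Fword F v := by
  induction u with
  | nil => rfl
  | cons i u ih => simp [Fword, ih, Function.comp_assoc]

lemma image_Fword_subset (hself : K = ⋃ i, F i '' K) (w : List (Fin N)) :
    Fword F w '' K ⊆ K := by
  induction w with
  | nil => simp [Fword]
  | cons i w ih =>
    rw [Fword, image_comp]
    conv_rhs => rw [hself]
    exact (image_mono ih).trans (subset_iUnion (fun j => F j '' K) i)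

lemma image_Fword_append_subset (hself : K = ⋃ i, F i '' K) (u v : List (Fin N)) :
    Fword F (u ++ v) '' K ⊆ Fword F u '' K := by
  rw [Fword_append, image_comp]
  exact image_mono (image_Fword_subset hself v)

lemma image_Fword_eq_iUnion (hself : K = ⋃ i, F i '' K) (u : List (Fin N)) :
    Fword F u '' K = ⋃ j, Fword F (u ++ [j]) '' K := by
  conv_lhs => rw [hself]
  simp only [image_iUnion, Fword_append, image_comp]
  rfl

@[simp] lemma cword_nil : cword c [] = 1 := rfl

@[simp] lemma cword_cons (i : Fin N) (w : List (Fin N)) :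
    cword c (i :: w) = c i * cword c w := by
  simp [cword]

lemma cword_append (u v : List (Fin N)) : cword c (u ++ v) = cword c u * cword c v := by
  simp [cword]

lemma cword_pos (hc : ∀ i, 0 < c i) (w : List (Fin N)) : 0 < cword c w :=
  List.prod_pos (by simpa using fun i _ => hc i)

lemma cword_le_one (hc : ∀ i, 0 < c i ∧ c i < 1) (w : List (Fin N)) : cword c w ≤ 1 := by
  induction w with
  | nil => simp
  | cons i w ih => simpa using mul_le_one₀ (hc i).2.le (cword_pos (fun j => (hc j).1) w).le ih

lemma exists_prefix_mem_band {cstar : ℝ} (hc : ∀ i, 0 < c i) (hcs : ∀ i, cstar ≤ c i)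
    (w : List (Fin N)) {θ : ℝ} (hw : cword c w ≤ θ) (hθ : cstar * θ < 1) :
    ∃ u v, w = u ++ v ∧ cstar * θ < cword c u ∧ cword c u ≤ θ := by
  induction w generalizing θ with
  | nil => exact ⟨[], [], rfl, by simpa using hθ, by simpa using hw⟩
  | cons i w ih =>
    by_cases h1 : 1 ≤ θ
    · exact ⟨[], i :: w, rfl, by simpa using hθ, by simpa using h1⟩
    have hci := hc i
    have hθ₀ : 0 < θ := (mul_pos hci (cword_pos hc w)).trans_le (by simpa using hw)
    obtain ⟨u, v, rfl, hu⟩ := ih (θ := θ / c i) (by rw [le_div_iff₀ hci]; simpa [mul_comm] using hw)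
      (by rw [mul_div_assoc', div_lt_one hci]; nlinarith [hcs i])
    refine ⟨i :: u, v, rfl, ?_⟩
    rw [mul_div_assoc', div_lt_iff₀ hci, le_div_iff₀ hci] at hu
    simp only [cword_cons]
    constructor <;> linarith

end Words

section Metric

variable {α : Type*} [MetricSpace α] {N : ℕ} {F : Fin N → α → α} {K : Set α} {c : Fin N → ℝ}

lemma dist_Fword (hF : ∀ i x y, dist (F i x) (F i y) = c i * dist x y)
    (w : List (Fin N)) (x y : α) :
    dist (Fword F w x) (Fword F w y) = cword c w * dist x y := by
  induction w with
  | nil => simp [Fword]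
  | cons i w ih =>
    simp only [Fword, comp_apply, hF, ih, cword_cons]
    ring

lemma infinite_image_Fword (hc : ∀ i, 0 < c i)
    (hF : ∀ i x y, dist (F i x) (F i y) = c i * dist x y) (hK : K.Infinite)
    (w : List (Fin N)) : (Fword F w '' K).Infinite :=
  hK.image fun x _ y _ hxy => by
    have h := dist_Fword hF w x y
    rw [hxy, dist_self, eq_comm, mul_eq_zero] at h
    exact dist_eq_zero.1 (h.resolve_left (cword_pos hc w).ne')

lemma isBounded_image_Fword (hc : ∀ i, 0 < c i)
    (hF : ∀ i x y, dist (F i x) (F i y) = c i * dist x y) (hK : IsBounded K)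
    (w : List (Fin N)) : IsBounded (Fword F w '' K) := by
  obtain ⟨C, hC⟩ := isBounded_iff.1 hK
  refine isBounded_iff.2 ⟨cword c w * C, ?_⟩
  rintro _ ⟨x, hx, rfl⟩ _ ⟨y, hy, rfl⟩
  rw [dist_Fword hF]
  exact mul_le_mul_of_nonneg_left (hC hx hy) (cword_pos hc w).le

lemma diam_image_Fword (hc : ∀ i, 0 < c i)
    (hF : ∀ i x y, dist (F i x) (F i y) = c i * dist x y) (hK : IsBounded K)
    (w : List (Fin N)) : diam (Fword F w '' K) = cword c w * diam K := by
  have hw := cword_pos hc w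
  apply le_antisymm
  · refine diam_le_of_forall_dist_le (by positivity) ?_
    rintro _ ⟨x, hx, rfl⟩ _ ⟨y, hy, rfl⟩
    rw [dist_Fword hF]
    exact mul_le_mul_of_nonneg_left (dist_le_diam_of_mem hK hx hy) hw.le
  · rw [mul_comm, ← le_div_iff₀ hw]
    refine diam_le_of_forall_dist_le (by positivity) fun x hx y hy => ?_
    rw [le_div_iff₀ hw, mul_comm, ← dist_Fword hF]
    exact dist_le_diam_of_mem (isBounded_image_Fword hc hF hK w) ⟨x, hx, rfl⟩ ⟨y, hy, rfl⟩

lemma cword_le_of_image_subset (hc : ∀ i, 0 < c i)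
    (hF : ∀ i x y, dist (F i x) (F i y) = c i * dist x y) (hK : IsBounded K)
    (hKinf : K.Infinite) {u v : List (Fin N)} (h : Fword F u '' K ⊆ Fword F v '' K) :
    cword c u ≤ cword c v := by
  obtain ⟨x, hx, y, hy, hxy⟩ := hKinf.nontrivial
  have hdiam : 0 < diam K := (dist_pos.2 hxy).trans_le (dist_le_diam_of_mem hK hx hy)
  have := diam_mono h (isBounded_image_Fword hc hF hK v)
  rw [diam_image_Fword hc hF hK, diam_image_Fword hc hF hK] at this
  exact le_of_mul_le_mul_right this hdiam

end Metric

section Linked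

variable {α : Type*}

lemma exists_infinite_inter_of_iUnion {ι : Type*} [Finite ι] {s : Set α} {t : ι → Set α}
    (h : (s ∩ ⋃ i, t i).Infinite) : ∃ i, (s ∩ t i).Infinite := by
  by_contra! h'
  exact h (by rw [inter_iUnion]; exact finite_iUnion h')

/-- The linking clause of `IsOverlapChain`. -/
def IsLinked (A : ℕ → Set α) (m : ℕ) : Prop :=
  ∀ i, i + 1 < m → (A (i + 1) ∩ ⋃ j ∈ Finset.range (i + 1), A j).Infinite

/-- Enlarging the members of a linked sequence and keeping only the first occurrence of each
enlarged set again gives a linked sequence. -/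
lemma IsLinked.exists_dedup {A B : ℕ → Set α} {m : ℕ} (hA : IsLinked A m)
    (hAB : ∀ i < m, A i ⊆ B i) :
    ∃ (p : ℕ) (σ : ℕ → ℕ), (∀ k < p, σ k < m) ∧
      (∀ k < p, ∀ k' < p, k ≠ k' → B (σ k) ≠ B (σ k')) ∧
      (∀ i < m, ∃ k < p, B i = B (σ k)) ∧ IsLinked (B ∘ σ) p := by
  classical
  set P : ℕ → Prop := fun i => i < m ∧ ∀ l < i, B l ≠ B i
  have hfin : (Set.ofPred P).Finite := (finite_Iio m).subset fun i hi => hi.1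
  have first : ∀ i < m, ∃ l ≤ i, P l ∧ B l = B i := by
    intro i hi
    have hex : ∃ l, B l = B i := ⟨i, rfl⟩
    exact ⟨Nat.find hex, Nat.find_min' hex rfl, ⟨(Nat.find_min' hex rfl).trans_lt hi,
      fun l hl h => Nat.find_min hex hl (h.trans (Nat.find_spec hex))⟩, Nat.find_spec hex⟩
  have hP : ∀ k < hfin.toFinset.card, P (Nat.nth P k) := fun k hk =>
    Nat.nth_mem_of_lt_card hfin hk
  refine ⟨hfin.toFinset.card, Nat.nth P, fun k hk => (hP k hk).1, ?_, ?_, ?_⟩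
  · intro k hk k' hk' hne
    rcases hne.lt_or_gt with h | h
    · exact (hP k' hk').2 _ (Nat.nth_lt_nth_of_lt_card hfin h hk')
    · exact ((hP k hk).2 _ (Nat.nth_lt_nth_of_lt_card hfin h hk)).symm
  · intro i hi
    obtain ⟨l, -, hl, hBl⟩ := first i hi
    obtain ⟨k, hk, rfl⟩ := Nat.exists_lt_card_finite_nth_eq hfin hl
    exact ⟨k, hk, hBl.symm⟩
  · intro k hk
    obtain ⟨i, hi⟩ : ∃ i, Nat.nth P (k + 1) = i + 1 :=
      Nat.exists_eq_succ_of_ne_zero (Nat.nth_lt_nth_of_lt_card hfin k.succ_pos hk).ne_bot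
    have him : i + 1 < m := hi ▸ (hP _ hk).1
    refine (hA i him).mono (inter_subset_inter ?_ (iUnion₂_subset fun l hl => ?_))
    · rw [comp_apply, hi]
      exact hAB _ him
    replace hl : l < i + 1 := Finset.mem_range.1 hl
    obtain ⟨l', hl'l, hl', hB⟩ := first l (by omega)
    obtain ⟨k', hk', rfl⟩ := Nat.exists_lt_card_finite_nth_eq hfin hl'
    have hk'k : k' < k + 1 := Nat.lt_of_nth_lt_nth_of_lt_card hfin (by omega) hk'
    refine (hAB l (by omega)).trans fun x hx => mem_iUnion₂.2 ⟨k', Finset.mem_range.2 hk'k, ?_⟩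
    rwa [comp_apply, hB]

end Linked

lemma Finset.exists_enum_of_mem {β : Type*} {S : Finset β} {g : β} (hg : g ∈ S) :
    ∃ w : ℕ → β, w 0 = g ∧ (∀ k, w k ∈ S) ∧
      ∀ k < S.card, ∀ k' < S.card, w k = w k' → k = k' := by
  classical
  set L := g :: (S.erase g).toList
  have hmem : ∀ x ∈ L, x ∈ S := by
    simp only [L, List.mem_cons, Finset.mem_toList]
    rintro x (rfl | hx)
    exacts [hg, Finset.mem_of_mem_erase hx]
  have hnodup : L.Nodup := List.nodup_cons.2 ⟨by simp, Finset.nodup_toList _⟩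
  have hlen : L.length = S.card := by
    have := Finset.card_pos.2 ⟨g, hg⟩
    simp only [L, List.length_cons, Finset.length_toList, Finset.card_erase_of_mem hg]
    omega
  refine ⟨fun k => L.getD k g, rfl, fun k => ?_, fun k hk k' hk' h => ?_⟩
  · dsimp only
    by_cases hk : k < L.length
    · rw [List.getD_eq_getElem _ _ hk]; exact hmem _ (List.getElem_mem hk)
    · rw [List.getD_eq_default _ _ (not_lt.1 hk)]; exact hg
  · rw [← hlen] at hk hk'
    simp only [List.getD_eq_getElem _ _ hk, List.getD_eq_getElem _ _ hk'] at h
    exact (hnodup.getElem_inj_iff).1 h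

lemma IsAntichain.finset_filter {β : Type*} {r : β → β → Prop} {S : Finset β}
    (hS : IsAntichain r ↑S) (p : β → Prop) [DecidablePred p] : IsAntichain r ↑(S.filter p) :=
  hS.subset (Finset.coe_subset.2 (Finset.filter_subset _ _))

section Chains

variable {α : Type*} {N : ℕ} {F : Fin N → α → α} {K : Set α} {c : Fin N → ℝ}
  {cstar δ₀ : ℝ} {L₀ : ℕ}

lemma IsOverlapChain.le_one_of_finite {m : ℕ} {w : ℕ → List (Fin N)}
    (h : IsOverlapChain F K m w) (hK : K.Finite) : m ≤ 1 := by
  by_contra! hm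
  exact h.2.2 0 hm ((hK.image _).subset inter_subset_left)

lemma comparable_of_mem_band (hδ₀ : 0 < δ₀) (hδc : δ₀ ≤ cstar) {θ x y : ℝ} (hy0 : 0 < y)
    (hx : cstar * θ ≤ x ∧ x ≤ θ) (hy : cstar * θ ≤ y ∧ y ≤ θ) :
    δ₀ ≤ x / y ∧ x / y ≤ 1 / δ₀ := by
  rw [le_div_iff₀ hy0, div_le_div_iff₀ hy0 hδ₀]
  constructor <;> nlinarith

/-- Copies of comparable size, none containing another, all meeting one of them in an infinite
set, form a `δ₀`-chain when listed with that one first. -/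
lemma card_le_of_anchor (hc : ∀ i, 0 < c i) (hδ₀ : 0 < δ₀) (hδc : δ₀ ≤ cstar)
    (hL₀ : ∀ m w, IsDeltaChain F c K δ₀ m w → m ≤ L₀) {θ : ℝ} {S : Finset (List (Fin N))}
    (hband : ∀ b ∈ S, cstar * θ ≤ cword c b ∧ cword c b ≤ θ)
    (hS : IsAntichain ((· ⊆ ·) on fun w => Fword F w '' K) ↑S) {g : List (Fin N)} (hg : g ∈ S)
    (hmeet : ∀ b ∈ S, b ≠ g → (Fword F b '' K ∩ Fword F g '' K).Infinite) :
    S.card ≤ L₀ := by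
  obtain ⟨w, hw0, hwS, hwinj⟩ := Finset.exists_enum_of_mem hg
  have hnest : ∀ k < S.card, ∀ k' < S.card, k ≠ k' →
      ¬ Fword F (w k) '' K ⊆ Fword F (w k') '' K := fun k hk k' hk' hne =>
    hS (hwS k) (hwS k') fun h => hne (hwinj k hk k' hk' h)
  refine hL₀ _ w ⟨⟨fun k hk k' hk' hne h => hnest k hk k' hk' hne h.subset, hnest,
    fun k hk => ?_⟩, fun k _ k' _ =>
      comparable_of_mem_band hδ₀ hδc (cword_pos hc _) (hband _ (hwS k)) (hband _ (hwS k'))⟩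
  have hne : w (k + 1) ≠ g := fun h => k.succ_ne_zero (hwinj _ hk 0 (by omega) (h.trans hw0.symm))
  refine (hmeet _ (hwS _) hne).mono (inter_subset_inter_right _ fun x hx => ?_)
  exact mem_iUnion₂.2 ⟨0, Finset.mem_range.2 k.succ_pos, hw0 ▸ hx⟩

lemma card_le_of_subset_copies (hc : ∀ i, 0 < c i) (hδ₀ : 0 < δ₀) (hδc : δ₀ ≤ cstar)
    (hL₀ : ∀ m w, IsDeltaChain F c K δ₀ m w → m ≤ L₀) {θ : ℝ} {S : Finset (List (Fin N))}
    (hband : ∀ b ∈ S, cstar * θ ≤ cword c b ∧ cword c b ≤ θ)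
    (hS : IsAntichain ((· ⊆ ·) on fun w => Fword F w '' K) ↑S) {P : Set α} (hP : P.Infinite)
    (hPS : ∀ b ∈ S, P ⊆ Fword F b '' K) : S.card ≤ L₀ := by
  rcases S.eq_empty_or_nonempty with rfl | ⟨g, hg⟩
  · exact Nat.zero_le _
  exact card_le_of_anchor hc hδ₀ hδc hL₀ hband hS hg fun b hb _ =>
    hP.mono (subset_inter (hPS b hb) (hPS g hg))

lemma card_lt_of_meet_copy (hc : ∀ i, 0 < c i) (hδ₀ : 0 < δ₀) (hδc : δ₀ ≤ cstar)
    (hL₀ : ∀ m w, IsDeltaChain F c K δ₀ m w → m ≤ L₀) {θ : ℝ} {S : Finset (List (Fin N))}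
    {g : List (Fin N)} (hg : g ∉ S)
    (hband : ∀ b ∈ insert g S, cstar * θ ≤ cword c b ∧ cword c b ≤ θ)
    (hS : IsAntichain ((· ⊆ ·) on fun w => Fword F w '' K) ↑(insert g S))
    (hmeet : ∀ b ∈ S, (Fword F b '' K ∩ Fword F g '' K).Infinite) : S.card < L₀ := by
  have := card_le_of_anchor hc hδ₀ hδc hL₀ hband hS (Finset.mem_insert_self g S)
    fun b hb hne => hmeet b ((Finset.mem_insert.1 hb).resolve_left hne)
  rwa [Finset.card_insert_of_notMem hg] at this

/-- The covering copies are the maximal ones among the ancestors of the members with ratio in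
`(c_* T, T]`. -/
lemma IsLinked.exists_band_cover (hc : ∀ i, 0 < c i) (hself : K = ⋃ i, F i '' K)
    (hcs : ∀ i, cstar ≤ c i) (hcs1 : cstar < 1) (hδ₀ : 0 < δ₀) (hδc : δ₀ ≤ cstar)
    (hL₀ : ∀ m w, IsDeltaChain F c K δ₀ m w → m ≤ L₀) {m : ℕ} {w : ℕ → List (Fin N)}
    (hlink : IsLinked (fun i => Fword F (w i) '' K) m) {T : ℝ}
    (hwT : ∀ i < m, cword c (w i) ≤ T) (hT : T ≤ 1) :
    ∃ p ≤ L₀, ∃ q : ℕ → List (Fin N), (∀ k < p, cstar * T < cword c (q k) ∧ cword c (q k) ≤ T) ∧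
      ∀ i < m, ∃ k < p, Fword F (w i) '' K ⊆ Fword F (q k) '' K := by
  have hanc : ∀ i, ∃ u, i < m → Fword F (w i) '' K ⊆ Fword F u '' K ∧
      cstar * T < cword c u ∧ cword c u ≤ T := by
    intro i
    by_cases hi : i < m
    · obtain ⟨u, v, hw, hu⟩ := exists_prefix_mem_band hc hcs (w i) (hwT i hi) (by nlinarith)
      exact ⟨u, fun _ => ⟨hw ▸ image_Fword_append_subset hself u v, hu⟩⟩
    · exact ⟨[], fun h => absurd h hi⟩
  choose u hu using hanc
  have hmax : ∀ i, ∃ j, i < m → j < m ∧ Fword F (u i) '' K ⊆ Fword F (u j) '' K ∧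
      ∀ j' < m, Fword F (u j) '' K ⊆ Fword F (u j') '' K →
        Fword F (u j') '' K ⊆ Fword F (u j) '' K := by
    intro i
    by_cases hi : i < m
    · obtain ⟨j, ⟨hjm, hij⟩, hj⟩ := Set.Finite.exists_maximalFor (fun j => Fword F (u j) '' K)
        {j | j < m ∧ Fword F (u i) '' K ⊆ Fword F (u j) '' K}
        ((finite_Iio m).subset fun j hj => hj.1) ⟨i, hi, subset_rfl⟩
      exact ⟨j, fun _ => ⟨hjm, hij, fun j' hj' hjj' => hj ⟨hj', hij.trans hjj'⟩ hjj'⟩⟩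
    · exact ⟨0, fun h => absurd h hi⟩
  choose μ hμ using hmax
  obtain ⟨p, σ, hσm, hσne, hσcover, hσlink⟩ :=
    hlink.exists_dedup (B := fun i => Fword F (u (μ i)) '' K) fun i hi =>
      (hu i hi).1.trans (hμ i hi).2.1
  have hband : ∀ k < p, cstar * T < cword c (u (μ (σ k))) ∧ cword c (u (μ (σ k))) ≤ T :=
    fun k hk => (hu _ (hμ _ (hσm k hk)).1).2
  refine ⟨p, hL₀ p (fun k => u (μ (σ k))) ⟨⟨hσne, ?_, hσlink⟩, ?_⟩, fun k => u (μ (σ k)),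
    hband, fun i hi => ?_⟩
  · intro k hk k' hk' hne hsub
    exact hσne k hk k' hk' hne (hsub.antisymm ((hμ _ (hσm k hk)).2.2 _ (hμ _ (hσm k' hk')).1 hsub))
  · intro k hk k' hk'
    exact comparable_of_mem_band hδ₀ hδc (cword_pos hc _) ⟨(hband k hk).1.le, (hband k hk).2⟩
      ⟨(hband k' hk').1.le, (hband k' hk').2⟩
  · obtain ⟨k, hk, hB⟩ := hσcover i hi
    exact ⟨k, hk, (hu i hi).1.trans ((hμ i hi).2.1.trans hB.subset)⟩

end Chains

section Packing

variable {α : Type*} [MetricSpace α] {N : ℕ} {F : Fin N → α → α} {K : Set α} {c : Fin N → ℝ}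
  {cstar δ₀ : ℝ} {L₀ : ℕ}

lemma card_le_of_meet_smaller_copy (hc : ∀ i, 0 < c i)
    (hF : ∀ i x y, dist (F i x) (F i y) = c i * dist x y) (hKb : IsBounded K)
    (hKinf : K.Infinite) (hδ₀ : 0 < δ₀) (hδc : δ₀ ≤ cstar)
    (hL₀ : ∀ m w, IsDeltaChain F c K δ₀ m w → m ≤ L₀) {θ : ℝ} {h : List (Fin N)}
    (hh : cstar * θ ≤ cword c h ∧ cword c h ≤ θ) {S : Finset (List (Fin N))}
    (hS : IsAntichain ((· ⊆ ·) on fun w => Fword F w '' K) ↑S)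
    (hmeet : ∀ b ∈ S, (Fword F b '' K ∩ Fword F h '' K).Infinite)
    (hsize : ∀ b ∈ S, cword c h < cword c b ∧ cword c b ≤ θ) : S.card ≤ 2 * L₀ := by
  classical
  set S₁ := S.filter fun b => Fword F h '' K ⊆ Fword F b '' K
  set S₂ := S.filter fun b => ¬ Fword F h '' K ⊆ Fword F b '' K
  have hband : ∀ b ∈ S, cstar * θ ≤ cword c b ∧ cword c b ≤ θ := fun b hb =>
    ⟨hh.1.trans (hsize b hb).1.le, (hsize b hb).2⟩
  have h₁ : S₁.card ≤ L₀ :=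
    card_le_of_subset_copies hc hδ₀ hδc hL₀ (fun b hb => hband b (Finset.mem_filter.1 hb).1)
      (hS.finset_filter _)
      (infinite_image_Fword hc hF hKinf h) fun b hb => (Finset.mem_filter.1 hb).2
  have h₂ : S₂.card < L₀ := by
    have hhS : h ∉ S₂ := fun hm => (hsize h (Finset.mem_filter.1 hm).1).1.false
    refine card_lt_of_meet_copy hc hδ₀ hδc hL₀ (θ := θ) hhS ?_ ?_
      fun b hb => hmeet b (Finset.mem_filter.1 hb).1
    · simp only [Finset.mem_insert]
      rintro b (rfl | hb)
      exacts [hh, hband b (Finset.mem_filter.1 hb).1]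
    · rw [Finset.coe_insert]
      refine (hS.finset_filter _).insert
        (fun b hb _ hbh => ?_) fun b hb _ => (Finset.mem_filter.1 hb).2
      have := (hsize b (Finset.mem_filter.1 hb).1).1
      exact this.not_ge (cword_le_of_image_subset hc hF hKb hKinf hbh)
  have : S₁.card + S₂.card = S.card := Finset.card_filter_add_card_filter_not _
  omega

lemma card_le_of_meet_child (hc : ∀ i, 0 < c i ∧ c i < 1)
    (hF : ∀ i x y, dist (F i x) (F i y) = c i * dist x y) (hKb : IsBounded K)
    (hKinf : K.Infinite) (hcs : ∀ i, cstar ≤ c i) {r : ℝ} (hr : ∀ i, c i ≤ r)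
    (hδ₀ : 0 < δ₀) (hδc : δ₀ ≤ cstar) (hL₀ : ∀ m w, IsDeltaChain F c K δ₀ m w → m ≤ L₀)
    {n B : ℕ} {g : List (Fin N)} {j : Fin N}
    (hsmall : ∀ S : Finset (List (Fin N)), IsAntichain ((· ⊆ ·) on fun w => Fword F w '' K) ↑S →
      (∀ b ∈ S, (Fword F b '' K ∩ Fword F (g ++ [j]) '' K).Infinite) →
      (∀ b ∈ S, r ^ n * cword c (g ++ [j]) < cword c b ∧ cword c b ≤ cword c (g ++ [j])) →
      S.card ≤ B)
    {S : Finset (List (Fin N))} (hS : IsAntichain ((· ⊆ ·) on fun w => Fword F w '' K) ↑S)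
    (hmeet : ∀ b ∈ S, (Fword F b '' K ∩ Fword F (g ++ [j]) '' K).Infinite)
    (hsize : ∀ b ∈ S, r ^ (n + 1) * cword c g < cword c b ∧ cword c b ≤ cword c g) :
    S.card ≤ B + 2 * L₀ := by
  classical
  have hc₀ : ∀ i, 0 < c i := fun i => (hc i).1
  have hgj : cword c (g ++ [j]) = cword c g * c j := by simp [cword_append]
  have hg := cword_pos hc₀ g
  set S₁ := S.filter fun b => cword c b ≤ cword c (g ++ [j])
  set S₂ := S.filter fun b => ¬ cword c b ≤ cword c (g ++ [j])
  have h₁ : S₁.card ≤ B := hsmall S₁ (hS.finset_filter _) (fun b hb => hmeet b (Finset.mem_filter.1 hb).1)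
    fun b hb => by
      obtain ⟨hb, hbj⟩ := Finset.mem_filter.1 hb
      refine ⟨lt_of_le_of_lt ?_ (hsize b hb).1, hbj⟩
      have hr₀ : 0 ≤ r ^ n := pow_nonneg ((hc₀ j).le.trans (hr j)) n
      rw [hgj, pow_succ]
      nlinarith [mul_le_mul_of_nonneg_left (hr j) hg.le]
  have h₂ : S₂.card ≤ 2 * L₀ := by
    refine card_le_of_meet_smaller_copy hc₀ hF hKb hKinf hδ₀ hδc hL₀ (θ := cword c g) ?_ (hS.finset_filter _)
      (fun b hb => hmeet b (Finset.mem_filter.1 hb).1) fun b hb => ?_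
    · rw [hgj]
      constructor <;> nlinarith [hcs j, (hc j).2]
    · obtain ⟨hb, hbj⟩ := Finset.mem_filter.1 hb
      exact ⟨lt_of_not_ge hbj, (hsize b hb).2⟩
  have : S₁.card + S₂.card = S.card := Finset.card_filter_add_card_filter_not _
  omega

lemma card_le_of_meet_copy (hc : ∀ i, 0 < c i ∧ c i < 1)
    (hF : ∀ i x y, dist (F i x) (F i y) = c i * dist x y) (hKb : IsBounded K)
    (hKinf : K.Infinite) (hself : K = ⋃ i, F i '' K) (hcs : ∀ i, cstar ≤ c i) {r : ℝ}
    (hr : ∀ i, c i ≤ r) (hδ₀ : 0 < δ₀) (hδc : δ₀ ≤ cstar)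
    (hL₀ : ∀ m w, IsDeltaChain F c K δ₀ m w → m ≤ L₀) (n : ℕ) (g : List (Fin N))
    {S : Finset (List (Fin N))} (hS : IsAntichain ((· ⊆ ·) on fun w => Fword F w '' K) ↑S)
    (hmeet : ∀ b ∈ S, (Fword F b '' K ∩ Fword F g '' K).Infinite)
    (hsize : ∀ b ∈ S, r ^ n * cword c g < cword c b ∧ cword c b ≤ cword c g) :
    S.card ≤ 2 * L₀ * n * N ^ n := by
  classical
  induction n generalizing g S with
  | zero =>
    simp only [mul_zero, zero_mul, Nat.le_zero, Finset.card_eq_zero,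
      Finset.eq_empty_iff_forall_notMem]
    intro b hb
    have := hsize b hb
    simp only [pow_zero, one_mul] at this
    exact this.1.not_ge this.2
  | succ n ih =>
    set S' : Fin N → Finset (List (Fin N)) := fun j =>
      S.filter fun b => (Fword F b '' K ∩ Fword F (g ++ [j]) '' K).Infinite
    have hcover : S ⊆ Finset.univ.biUnion S' := fun b hb => by
      rw [image_Fword_eq_iUnion hself g] at hmeet
      obtain ⟨j, hj⟩ := exists_infinite_inter_of_iUnion (hmeet b hb)
      exact Finset.mem_biUnion.2 ⟨j, Finset.mem_univ _, Finset.mem_filter.2 ⟨hb, hj⟩⟩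
    have hchild : ∀ j, (S' j).card ≤ 2 * L₀ * n * N ^ n + 2 * L₀ := fun j =>
      card_le_of_meet_child hc hF hKb hKinf hcs hr hδ₀ hδc hL₀ (fun S => ih (g ++ [j]) (S := S))
        (hS.finset_filter _)
        (fun b hb => (Finset.mem_filter.1 hb).2) fun b hb => hsize b (Finset.mem_filter.1 hb).1
    calc S.card ≤ (Finset.univ.biUnion S').card := Finset.card_le_card hcover
      _ ≤ ∑ j, (S' j).card := Finset.card_biUnion_le
      _ ≤ ∑ _j : Fin N, (2 * L₀ * n * N ^ n + 2 * L₀) := Finset.sum_le_sum fun j _ => hchild j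
      _ = 2 * L₀ * n * N ^ (n + 1) + 2 * L₀ * N := by simp [pow_succ]; ring
      _ ≤ 2 * L₀ * n * N ^ (n + 1) + 2 * L₀ * N ^ (n + 1) := by
        gcongr; exact Nat.le_self_pow n.succ_ne_zero N
      _ = 2 * L₀ * (n + 1) * N ^ (n + 1) := by ring

open Classical in
lemma card_filter_subset_copy_le (hc : ∀ i, 0 < c i ∧ c i < 1)
    (hF : ∀ i x y, dist (F i x) (F i y) = c i * dist x y) (hKb : IsBounded K)
    (hKinf : K.Infinite) (hself : K = ⋃ i, F i '' K) (hcs : ∀ i, cstar ≤ c i) {r : ℝ}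
    (hr : ∀ i, c i ≤ r) (hδ₀ : 0 < δ₀) (hδc : δ₀ ≤ cstar)
    (hL₀ : ∀ m w, IsDeltaChain F c K δ₀ m w → m ≤ L₀) {m : ℕ} {w : ℕ → List (Fin N)}
    (hnest : ∀ i < m, ∀ j < m, i ≠ j → ¬ Fword F (w i) '' K ⊆ Fword F (w j) '' K)
    (n : ℕ) (g : List (Fin N))
    (hsize : ∀ i < m, Fword F (w i) '' K ⊆ Fword F g '' K → r ^ n * cword c g < cword c (w i)) :
    ((Finset.range m).filter fun i => Fword F (w i) '' K ⊆ Fword F g '' K).card ≤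
      2 * L₀ * n * N ^ n := by
  have hc₀ : ∀ i, 0 < c i := fun i => (hc i).1
  set S := (Finset.range m).filter fun i => Fword F (w i) '' K ⊆ Fword F g '' K
  have hmem : ∀ i ∈ S, i < m ∧ Fword F (w i) '' K ⊆ Fword F g '' K := fun i hi =>
    ⟨Finset.mem_range.1 (Finset.mem_filter.1 hi).1, (Finset.mem_filter.1 hi).2⟩
  have hwinj : InjOn w S := fun i hi i' hi' h => by
    by_contra hne
    exact hnest i (hmem i hi).1 i' (hmem i' hi').1 hne (h ▸ subset_rfl)
  rw [← Finset.card_image_of_injOn hwinj]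
  refine card_le_of_meet_copy hc hF hKb hKinf hself hcs hr hδ₀ hδc hL₀ n g ?_ ?_ ?_
  · rintro _ hb _ hb' hne
    obtain ⟨i, hi, rfl⟩ := Finset.mem_image.1 hb
    obtain ⟨i', hi', rfl⟩ := Finset.mem_image.1 hb'
    exact hnest i (hmem i hi).1 i' (hmem i' hi').1 fun h => hne (h ▸ rfl)
  · intro b hb
    obtain ⟨i, hi, rfl⟩ := Finset.mem_image.1 hb
    rw [inter_eq_left.2 (hmem i hi).2]
    exact infinite_image_Fword hc₀ hF hKinf (w i)
  · intro b hb
    obtain ⟨i, hi, rfl⟩ := Finset.mem_image.1 hb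
    exact ⟨hsize i (hmem i hi).1 (hmem i hi).2,
      cword_le_of_image_subset hc₀ hF hKb hKinf (hmem i hi).2⟩

lemma IsDeltaChain.length_le (hc : ∀ i, 0 < c i ∧ c i < 1)
    (hF : ∀ i x y, dist (F i x) (F i y) = c i * dist x y) (hKb : IsBounded K)
    (hKinf : K.Infinite) (hself : K = ⋃ i, F i '' K) (hcs : ∀ i, cstar ≤ c i)
    (hcs1 : cstar < 1) {r : ℝ} (hr : ∀ i, c i ≤ r) (hδ₀ : 0 < δ₀) (hδc : δ₀ ≤ cstar)
    (hL₀ : ∀ m w, IsDeltaChain F c K δ₀ m w → m ≤ L₀) {δ : ℝ} (hδ : 0 < δ) {n : ℕ}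
    (hn : r ^ n < δ) {m : ℕ} {w : ℕ → List (Fin N)} (hchain : IsDeltaChain F c K δ m w) :
    m ≤ L₀ * (2 * L₀ * n * N ^ n) := by
  classical
  have hc₀ : ∀ i, 0 < c i := fun i => (hc i).1
  obtain ⟨⟨-, hnest, hlink⟩, hratio⟩ := hchain
  rcases m.eq_zero_or_pos with rfl | hm
  · exact Nat.zero_le _
  obtain ⟨i₀, hi₀, hT⟩ := Finset.exists_max_image (Finset.range m) (fun i => cword c (w i))
    ⟨0, Finset.mem_range.2 hm⟩
  replace hi₀ := Finset.mem_range.1 hi₀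
  obtain ⟨p, hp, q, hq, hcover⟩ := IsLinked.exists_band_cover hc₀ hself hcs hcs1 hδ₀ hδc hL₀
    hlink (fun i hi => hT i (Finset.mem_range.2 hi)) (cword_le_one hc (w i₀))
  set S : ℕ → Finset ℕ := fun k =>
    (Finset.range m).filter fun i => Fword F (w i) '' K ⊆ Fword F (q k) '' K
  have hS : ∀ k < p, (S k).card ≤ 2 * L₀ * n * N ^ n := fun k hk =>
    card_filter_subset_copy_le hc hF hKb hKinf hself hcs hr hδ₀ hδc hL₀ hnest n (q k)
      fun i hi _ => by
        have hδT := (le_div_iff₀ (cword_pos hc₀ (w i₀))).1 (hratio i hi i₀ hi₀).1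
        nlinarith [mul_lt_mul_of_pos_right hn (cword_pos hc₀ (q k)),
          mul_le_mul_of_nonneg_left (hq k hk).2 hδ.le]
  have hcoverS : Finset.range m ⊆ (Finset.range p).biUnion S := fun i hi => by
    obtain ⟨k, hk, hik⟩ := hcover i (Finset.mem_range.1 hi)
    exact Finset.mem_biUnion.2 ⟨k, Finset.mem_range.2 hk, Finset.mem_filter.2 ⟨hi, hik⟩⟩
  calc m = (Finset.range m).card := (Finset.card_range m).symm
    _ ≤ ∑ k ∈ Finset.range p, (S k).card :=
      (Finset.card_le_card hcoverS).trans Finset.card_biUnion_le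
    _ ≤ p * (2 * L₀ * n * N ^ n) := by
      simpa using Finset.sum_le_card_nsmul _ _ _ fun k hk => hS k (Finset.mem_range.1 hk)
    _ ≤ L₀ * (2 * L₀ * n * N ^ n) := Nat.mul_le_mul_right _ hp

end Packing

theorem stmt7_general {d N : ℕ} (F : Fin N → Pt d → Pt d) (c : Fin N → ℝ)
    (hc : ∀ i, 0 < c i ∧ c i < 1)
    (hF : ∀ i x y, dist (F i x) (F i y) = c i * dist x y)
    (K : Set (Pt d)) (hKc : IsCompact K)
    (hself : K = ⋃ i, F i '' K)
    (cstar : ℝ) (hcstar : IsLeast (Set.range c) cstar) :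
    (∃ δ : ℝ, 0 < δ ∧ δ ≤ cstar ∧
      ∃ L : ℕ, ∀ (m : ℕ) (w : ℕ → List (Fin N)), IsDeltaChain F c K δ m w → m ≤ L) ↔
    (∀ δ : ℝ, 0 < δ → δ ≤ cstar →
      ∃ L : ℕ, ∀ (m : ℕ) (w : ℕ → List (Fin N)), IsDeltaChain F c K δ m w → m ≤ L) := by
  obtain ⟨⟨i₀, rfl⟩, hcs⟩ := hcstar
  refine ⟨fun ⟨δ₀, hδ₀, hδc, L₀, hL₀⟩ δ hδ _ => ?_,
    fun h => ⟨c i₀, (hc i₀).1, le_rfl, h _ (hc i₀).1 le_rfl⟩⟩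
  rcases K.finite_or_infinite with hK | hK
  · exact ⟨1, fun m w hw => hw.1.le_one_of_finite hK⟩
  obtain ⟨i₁, -, hi₁⟩ := Finset.exists_max_image Finset.univ c ⟨i₀, Finset.mem_univ _⟩
  obtain ⟨n, hn⟩ := exists_pow_lt_of_lt_one hδ (hc i₁).2
  exact ⟨_, fun m w hw => hw.length_le hc hF hKc.isBounded hK hself (fun i => hcs ⟨i, rfl⟩)
    (hc i₀).2 (fun i => hi₁ i (Finset.mem_univ i)) hδ₀ hδc hL₀ hδ hn⟩

/-- **Proposition 3.7.** For a self-similar set `K` with IFS `{F_i}` of contractive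
similitudes with ratios `c_i` and `c_* = min_i c_i`, the following are equivalent:
(1) there exists `0 < δ ≤ c_*` with `L_δ(K) < ∞`;
(2) for every `0 < δ ≤ c_*`, `L_δ(K) < ∞`. -/
theorem stmt7 {d N : ℕ} (hN : 2 ≤ N) (F : Fin N → Pt d → Pt d) (c : Fin N → ℝ)
    (hc : ∀ i, 0 < c i ∧ c i < 1)
    (hF : ∀ i x y, dist (F i x) (F i y) = c i * dist x y)
    (K : Set (Pt d)) (hKc : IsCompact K) (hKne : K.Nonempty)
    (hself : K = ⋃ i, F i '' K)
    (cstar : ℝ) (hcstar : IsLeast (Set.range c) cstar) :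
    (∃ δ : ℝ, 0 < δ ∧ δ ≤ cstar ∧
      ∃ L : ℕ, ∀ (m : ℕ) (w : ℕ → List (Fin N)), IsDeltaChain F c K δ m w → m ≤ L) ↔
    (∀ δ : ℝ, 0 < δ → δ ≤ cstar →
      ∃ L : ℕ, ∀ (m : ℕ) (w : ℕ → List (Fin N)), IsDeltaChain F c K δ m w → m ≤ L) :=
  stmt7_general F c hc hF K hKc hself cstar hcstar
end
end
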